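/- Let q be a connected query graph with n ≥ 1 vertices and let G be a data graph. Then the number of matches of q in G satisfies |ℝ_G(q)| ≤ |V_G| · D_G^{n−1}, where D_G is the maximum degree of G. -/

import Mathlib

/-!
Root the connected query graph at a vertex `r` and let every other vertex `v` point to a
neighbour `parent v` strictly closer to `r`. A homomorphism `f` into `G` is then determined by
`f r` together with, for each `v ≠ r`, the position of `f v` among the at most `D_G`
neighbours of `f (parent v)`. This encodes homomorphisms injectively into
`V_G × (Fin D_G)^(n-1)`, and every match is in particular a homomorphism.
-/

/-- A query graph on a vertex type `α`: a simple graph given as a subgraph of the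
complete graph, carrying its own vertex set `verts`. -/
abbrev QGraph (α : Type*) := SimpleGraph.Subgraph (⊤ : SimpleGraph α)

/-- A match of `q` in `G`, given as a function on the vertex set of `q`: an
injective map sending every edge of `q` to an edge of `G`. -/
def IsMatchOn {α β : Type*} (q : QGraph α) (G : SimpleGraph β)
    (f : q.verts → β) : Prop :=
  Function.Injective f ∧ ∀ v w : q.verts, q.Adj v w → G.Adj (f v) (f w)

namespace SimpleGraph

variable {V β : Type*} {H : SimpleGraph V} {G : SimpleGraph β}

lemma Connected.exists_adj_dist_lt (hH : H.Connected) {v r : V} (hv : v ≠ r) :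
    ∃ w, H.Adj v w ∧ H.dist w r < H.dist v r := by
  obtain ⟨p, hp⟩ := hH.exists_walk_length_eq_dist v r
  cases p with
  | nil => exact absurd rfl hv
  | cons hadj p =>
    refine ⟨_, hadj, ?_⟩
    have := dist_le p
    rw [Walk.length_cons] at hp
    omega

lemma nonempty_neighborSet_embedding_fin_maxDegree [Fintype β] [DecidableRel G.Adj] (b : β) :
    Nonempty (G.neighborSet b ↪ Fin G.maxDegree) :=
  Function.Embedding.nonempty_of_card_le <| by
    rw [card_neighborSet_eq_degree, Fintype.card_fin]
    exact G.degree_le_maxDegree b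

lemma eq_of_neighborSet_embedding_eq {ι : Type*} (e : ∀ b, G.neighborSet b ↪ ι)
    {a b x y : β} (hab : a = b) (hx : G.Adj a x) (hy : G.Adj b y)
    (h : e a ⟨x, hx⟩ = e b ⟨y, hy⟩) : x = y := by
  subst hab
  exact congrArg Subtype.val ((e a).injective h)

theorem Connected.card_hom_le [Finite V] [Fintype β] [DecidableRel G.Adj] (hH : H.Connected) :
    Nat.card (H →g G) ≤ Fintype.card β * G.maxDegree ^ (Nat.card V - 1) := by
  classical
  obtain ⟨r⟩ := hH.nonempty
  choose parent hparent_adj hparent_dist using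
    fun v : {v // v ≠ r} => hH.exists_adj_dist_lt v.2
  have e := fun b => (nonempty_neighborSet_embedding_fin_maxDegree (G := G) b).some
  let code : (H →g G) → β × ({v // v ≠ r} → Fin G.maxDegree) := fun f =>
    (f r, fun v => e (f (parent v)) ⟨f v, (f.map_adj (hparent_adj v)).symm⟩)
  refine (Nat.card_le_card_of_injective code fun f g hfg => ?_).trans_eq ?_
  · simp only [code, Prod.mk.injEq, funext_iff] at hfg
    obtain ⟨hr, hstep⟩ := hfg
    ext v
    induction v using (measure fun v => H.dist v r).wf.induction with
    | _ v ih =>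
      by_cases hv : v = r
      · exact hv ▸ hr
      · exact eq_of_neighborSet_embedding_eq e (ih _ (hparent_dist ⟨v, hv⟩)) _ _
          (hstep ⟨v, hv⟩)
  · have : Fintype V := Fintype.ofFinite V
    simp [Nat.card_eq_fintype_card, Fintype.card_subtype_compl]

end SimpleGraph

/-- For a connected query graph `q` with `n ≥ 1` vertices and a data graph `G`,
the number of matches of `q` in `G` is at most `|V_G| · D_G^(n-1)`, where `D_G`
is the maximum degree of `G`. -/
theorem stmt_13 {α β : Type*} [Fintype β] (q : QGraph α) (hconn : q.Connected)
    (n : ℕ) (hn : 1 ≤ n) (hcard : Nat.card q.verts = n)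
    (G : SimpleGraph β) [DecidableRel G.Adj] :
    Nat.card {f : q.verts → β // IsMatchOn q G f} ≤
      Fintype.card β * G.maxDegree ^ (n - 1) := by
  have : Finite q.verts := Nat.finite_of_card_ne_zero (by omega)
  let toHom : {f : q.verts → β // IsMatchOn q G f} → (q.coe →g G) :=
    fun f => ⟨f.1, fun h => f.2.2 _ _ h⟩
  calc Nat.card {f : q.verts → β // IsMatchOn q G f}
      ≤ Nat.card (q.coe →g G) :=
        Nat.card_le_card_of_injective toHom fun f g h => Subtype.ext (congrArg DFunLike.coe h)
    _ ≤ Fintype.card β * G.maxDegree ^ (n - 1) := hcard ▸ hconn.coe.card_hom_le
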